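/- Let T be the caterpillar C(0,...,0,2,0,...,0) obtained from a path P_{2n+1} with vertices v_1, ..., v_{2n+1} by attaching 2 pendant vertices to one even-indexed vertex v_{2i} (and none elsewhere). Then the largest adjacency eigenvalue of T satisfies λ_1(T)^2 < 5. -/

import Mathlib

open scoped Classical

/-- Characteristic polynomial of the adjacency matrix of a graph. -/
noncomputable def gCharpoly {V : Type*} [Fintype V] (G : SimpleGraph V) : Polynomial ℝ :=
  letI := Classical.decEq V
  letI := Classical.decRel G.Adj
  (G.adjMatrix ℝ).charpoly

/-- Adjacency eigenvalues listed in non-increasing order (with multiplicity). -/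
noncomputable def eigsDesc {V : Type*} [Fintype V] (G : SimpleGraph V) : List ℝ :=
  ((gCharpoly G).roots.sort (· ≤ ·)).reverse

/-- Number of adjacency eigenvalues in the open interval (-1, 1), with multiplicity. -/
noncomputable def numIn {V : Type*} [Fintype V] (G : SimpleGraph V) : ℕ :=
  ((gCharpoly G).roots.filter (fun x => -1 < x ∧ x < 1)).card

/-- Multiplicity of `lam` as an adjacency eigenvalue. -/
noncomputable def multOf {V : Type*} [Fintype V] (G : SimpleGraph V) (lam : ℝ) : ℕ :=
  (gCharpoly G).roots.count lam

/-- Nullity: dimension of the kernel of the adjacency matrix. -/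
noncomputable def gNullity {V : Type*} [Fintype V] (G : SimpleGraph V) : ℕ :=
  letI := Classical.decRel G.Adj
  Module.finrank ℝ (LinearMap.ker (G.adjMatrix ℝ).mulVecLin)

/-- Base relation for the caterpillar `C(r₁, …, rₙ)`: the path `P_{2n+1}` on
`Fin (2*n+1)` (vertex `vⱼ` of the paper is index `j-1`), with `r i` pendant
vertices attached to `v_{2(i+1)}`, i.e. to index `2*i+1`. -/
def catRel (n : ℕ) (r : Fin n → ℕ) :
    (Fin (2 * n + 1) ⊕ (Σ i : Fin n, Fin (r i))) →
    (Fin (2 * n + 1) ⊕ (Σ i : Fin n, Fin (r i))) → Prop :=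
  fun x y =>
    match x, y with
    | Sum.inl a, Sum.inl b => (a : ℕ) + 1 = (b : ℕ)
    | Sum.inl a, Sum.inr p => (a : ℕ) = 2 * (p.1 : ℕ) + 1
    | _, _ => False

/-- The caterpillar tree `C(r₁, …, rₙ)`. -/
def caterpillar (n : ℕ) (r : Fin n → ℕ) :
    SimpleGraph (Fin (2 * n + 1) ⊕ (Σ i : Fin n, Fin (r i))) :=
  SimpleGraph.fromRel (catRel n r)

/-- Base relation for `S(r₁, …, rₙ)`: the caterpillar `C(r₁, …, rₙ)`, together with
one new pendant vertex at each vertex `v₁, v₃, …, v_{2n+1}` (the odd-indexed path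
vertices, i.e. indices `0, 2, …, 2n`, which include the two degree-one path endpoints),
and one new pendant vertex at each pendant vertex of the caterpillar. -/
def sRel (n : ℕ) (r : Fin n → ℕ) :
    ((Fin (2 * n + 1) ⊕ (Σ i : Fin n, Fin (r i))) ⊕ (Fin (n + 1) ⊕ (Σ i : Fin n, Fin (r i)))) →
    ((Fin (2 * n + 1) ⊕ (Σ i : Fin n, Fin (r i))) ⊕ (Fin (n + 1) ⊕ (Σ i : Fin n, Fin (r i)))) →
    Prop :=
  fun x y =>
    match x, y with
    | Sum.inl a, Sum.inl b => catRel n r a b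
    | Sum.inl (Sum.inl a), Sum.inr (Sum.inl k) => (a : ℕ) = 2 * (k : ℕ)
    | Sum.inl (Sum.inr p), Sum.inr (Sum.inr q) => p = q
    | _, _ => False

/-- The tree `S(r₁, …, rₙ)`. -/
def sTree (n : ℕ) (r : Fin n → ℕ) :
    SimpleGraph ((Fin (2 * n + 1) ⊕ (Σ i : Fin n, Fin (r i))) ⊕
      (Fin (n + 1) ⊕ (Σ i : Fin n, Fin (r i)))) :=
  SimpleGraph.fromRel (sRel n r)

/-!
If `A x ≤ c • x` entrywise for a nonnegative matrix `A` and a positive vector `x`, every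
eigenvalue of `A` has absolute value at most `c`: compare an eigenvector `y` with `x` at an index
maximising `|y| / x`. For the caterpillar take `x = t ^ d` on a spine vertex at distance `d` from
the vertex carrying the two pendants, with `t = 129 / 200`, and `x = 5 / 11` on the pendants.
Then `t + t⁻¹ ≤ 11 / 5` handles the other spine vertices and `2 t + 2 · 5 / 11 ≤ 11 / 5` the
centre, so `λ₁ ≤ 11 / 5` and `λ₁ ^ 2 ≤ 121 / 25 < 5`.
-/
open Matrix

theorem Matrix.abs_le_of_mulVec_le_smul {ι : Type*} [Fintype ι] {A : Matrix ι ι ℝ}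
    (hA : ∀ i j, 0 ≤ A i j) {x : ι → ℝ} (hx : ∀ i, 0 < x i) {c : ℝ}
    (hAx : ∀ i, (A *ᵥ x) i ≤ c * x i) {μ : ℝ} (hμ : Module.End.HasEigenvalue (toLin' A) μ) :
    |μ| ≤ c := by
  obtain ⟨y, hy⟩ := hμ.exists_hasEigenvector
  have hAy : A *ᵥ y = μ • y := by
    simpa [Module.End.mem_eigenspace_iff] using hy.apply_eq_smul
  obtain ⟨w, hw⟩ := Function.ne_iff.mp hy.2
  obtain ⟨v, -, hv⟩ := Finset.univ.exists_max_image (fun i => |y i| / x i) ⟨w, Finset.mem_univ w⟩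
  set s := |y v| / x v
  have hy_le : ∀ j, |y j| ≤ s * x j := fun j =>
    (div_le_iff₀ (hx j)).mp (hv j (Finset.mem_univ j))
  have hs : 0 < s := (div_pos (abs_pos.mpr hw) (hx w)).trans_le (hv w (Finset.mem_univ w))
  have hyv : |y v| = s * x v := (div_mul_cancel₀ _ (hx v).ne').symm
  have key : |μ| * |y v| ≤ c * |y v| :=
    calc |μ| * |y v| = |∑ j, A v j * y j| := by
          rw [← abs_mul, ← smul_eq_mul, ← Pi.smul_apply, ← hAy]; rfl
      _ ≤ ∑ j, A v j * |y j| := by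
          refine (Finset.abs_sum_le_sum_abs _ _).trans_eq (Finset.sum_congr rfl fun j _ => ?_)
          rw [abs_mul, abs_of_nonneg (hA v j)]
      _ ≤ ∑ j, A v j * (s * x j) :=
          Finset.sum_le_sum fun j _ => mul_le_mul_of_nonneg_left (hy_le j) (hA v j)
      _ = s * (A *ᵥ x) v := by
          simp only [mulVec, dotProduct, Finset.mul_sum, mul_left_comm]
      _ ≤ s * (c * x v) := mul_le_mul_of_nonneg_left (hAx v) hs.le
      _ = c * |y v| := by rw [hyv]; ring
  exact le_of_mul_le_mul_right key (hyv ▸ mul_pos hs (hx v))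

theorem SimpleGraph.abs_le_of_mem_roots_gCharpoly {V : Type*} [Fintype V] (G : SimpleGraph V)
    {x : V → ℝ} (hx : ∀ v, 0 < x v) {c : ℝ}
    (hGx : ∀ v, (∑ w, if G.Adj v w then x w else 0) ≤ c * x v) {μ : ℝ}
    (hμ : μ ∈ (gCharpoly G).roots) : |μ| ≤ c := by
  have hμ' : Module.End.HasEigenvalue (toLin' (G.adjMatrix ℝ)) μ := by
    rw [Module.End.hasEigenvalue_iff_isRoot_charpoly, charpoly_toLin']
    exact Polynomial.isRoot_of_mem_roots hμ
  refine abs_le_of_mulVec_le_smul (fun v w => ?_) hx (fun v => ?_) hμ'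
  · rw [adjMatrix_apply]; positivity
  · simpa [mulVec, dotProduct, adjMatrix_apply] using hGx v

theorem abs_eigsDesc_getD_zero_le {V : Type*} [Fintype V] (G : SimpleGraph V) {c : ℝ}
    (hc : 0 ≤ c) (h : ∀ μ ∈ (gCharpoly G).roots, |μ| ≤ c) : |(eigsDesc G).getD 0 0| ≤ c := by
  rcases hL : eigsDesc G with _ | ⟨μ, l⟩
  · simpa using hc
  · have hμ : μ ∈ eigsDesc G := hL ▸ List.mem_cons_self
    simpa using h μ (by simpa [eigsDesc] using hμ)

theorem Finset.sum_ite_comp_eq_le {ι β : Type*} [DecidableEq β] {s : Finset ι} {g : ι → β}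
    (hg : Set.InjOn g s) (f : β → ℝ) {z : β} (hz : 0 ≤ f z) :
    (∑ x ∈ s, if g x = z then f (g x) else 0) ≤ f z := by
  rw [← Finset.sum_image (f := fun y => if y = z then f y else 0) hg, Finset.sum_ite_eq']
  split_ifs <;> simp [hz]

theorem Fin.sum_ite_intCast_eq_le {N : ℕ} (f : ℤ → ℝ) {z : ℤ} (hz : 0 ≤ f z) :
    (∑ b : Fin N, if (b : ℤ) = z then f b else 0) ≤ f z :=
  Finset.sum_ite_comp_eq_le (Nat.cast_injective.comp Fin.val_injective).injOn f hz

theorem zpow_abs_add_one_add_zpow_abs_sub_one {K : Type*} [Field K] {t : K} (ht : t ≠ 0)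
    {k : ℤ} (hk : k ≠ 0) : t ^ |k + 1| + t ^ |k - 1| = (t + t⁻¹) * t ^ |k| := by
  rcases hk.lt_or_gt with hk | hk
  · rw [abs_of_nonpos (by omega : k + 1 ≤ 0), abs_of_neg (by omega : k - 1 < 0), abs_of_neg hk,
      show -(k + 1) = -k - 1 by ring, show -(k - 1) = -k + 1 by ring, zpow_sub₀ ht,
      zpow_add₀ ht, zpow_one]
    field_simp
    ring
  · rw [abs_of_pos (by omega : 0 < k + 1), abs_of_nonneg (by omega : 0 ≤ k - 1), abs_of_pos hk,
      zpow_sub₀ ht, zpow_add₀ ht, zpow_one]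
    field_simp

noncomputable def geomDecay (m z : ℤ) : ℝ := (129 / 200 : ℝ) ^ |z - m|

theorem geomDecay_pos (m z : ℤ) : 0 < geomDecay m z := by
  unfold geomDecay; positivity

theorem geomDecay_add_one_add_sub_one_le (m z : ℤ) :
    geomDecay m (z + 1) + geomDecay m (z - 1) + (if z = m then 10 / 11 else 0)
      ≤ 11 / 5 * geomDecay m z := by
  unfold geomDecay
  split_ifs with hz
  · subst hz
    norm_num
  · rw [show z + 1 - m = z - m + 1 by ring, show z - 1 - m = z - m - 1 by ring,
      zpow_abs_add_one_add_zpow_abs_sub_one (by norm_num) (sub_ne_zero.mpr hz), add_zero]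
    gcongr
    norm_num

section Caterpillar

variable {n : ℕ} {r : Fin n → ℕ}

theorem caterpillar_adj_inl_inl {a b : Fin (2 * n + 1)} :
    (caterpillar n r).Adj (.inl a) (.inl b) ↔ (b : ℤ) = a + 1 ∨ (b : ℤ) = a - 1 := by
  simp only [caterpillar, SimpleGraph.fromRel_adj, catRel, ne_eq, Sum.inl.injEq]
  constructor
  · rintro ⟨-, h | h⟩ <;> omega
  · intro h
    exact ⟨fun hab => by subst hab; omega, by omega⟩

theorem caterpillar_adj_inl_inr {a : Fin (2 * n + 1)} {p : Σ j, Fin (r j)} :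
    (caterpillar n r).Adj (.inl a) (.inr p) ↔ (a : ℤ) = 2 * p.1 + 1 := by
  simp only [caterpillar, SimpleGraph.fromRel_adj, ne_eq, reduceCtorEq, not_false_eq_true, catRel,
    or_false, true_and]
  omega

theorem caterpillar_adj_inr_inl {p : Σ j, Fin (r j)} {a : Fin (2 * n + 1)} :
    (caterpillar n r).Adj (.inr p) (.inl a) ↔ (a : ℤ) = 2 * p.1 + 1 :=
  (caterpillar n r).adj_comm _ _ |>.trans caterpillar_adj_inl_inr

theorem caterpillar_not_adj_inr_inr (p q : Σ j, Fin (r j)) :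
    ¬ (caterpillar n r).Adj (.inr p) (.inr q) := by
  simp [caterpillar, catRel]

theorem caterpillar_sum_adj_inl_inl_le (a : Fin (2 * n + 1)) {f : ℤ → ℝ} (hf : ∀ z, 0 ≤ f z) :
    (∑ b : Fin (2 * n + 1), if (caterpillar n r).Adj (.inl a) (.inl b) then f b else 0)
      ≤ f (a + 1) + f (a - 1) := by
  calc _ ≤ ∑ b : Fin (2 * n + 1),
        ((if (b : ℤ) = a + 1 then f b else 0) + (if (b : ℤ) = a - 1 then f b else 0)) := by
        refine Finset.sum_le_sum fun b _ => ?_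
        simp only [caterpillar_adj_inl_inl]
        split_ifs <;> first | omega | linarith [hf b]
    _ ≤ f (a + 1) + f (a - 1) := by
        rw [Finset.sum_add_distrib]
        exact add_le_add (Fin.sum_ite_intCast_eq_le f (hf _)) (Fin.sum_ite_intCast_eq_le f (hf _))

theorem caterpillar_sum_adj_inl_inr_le {i : Fin n} (hri : r i ≤ 2) (hr : ∀ j ≠ i, r j = 0)
    (a : Fin (2 * n + 1)) {c : ℝ} (hc : 0 ≤ c) :
    (∑ p : Σ j, Fin (r j), if (caterpillar n r).Adj (.inl a) (.inr p) then c else 0)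
      ≤ if (a : ℤ) = 2 * i + 1 then 2 * c else 0 := by
  rw [Fintype.sum_sigma]
  simp only [caterpillar_adj_inl_inr, Finset.sum_const, Finset.card_univ, Fintype.card_fin,
    nsmul_eq_mul]
  rw [Finset.sum_eq_single i (fun j _ hj => by simp [hr j hj]) (by simp)]
  have : (r i : ℝ) ≤ 2 := by exact_mod_cast hri
  split_ifs <;> nlinarith

noncomputable def caterpillarTestVector (n : ℕ) (i : Fin n) (r : Fin n → ℕ) :
    Fin (2 * n + 1) ⊕ (Σ j, Fin (r j)) → ℝ
  | .inl a => geomDecay (2 * i + 1) a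
  | .inr _ => 5 / 11

theorem caterpillarTestVector_pos (n : ℕ) (i : Fin n) (r : Fin n → ℕ)
    (v : Fin (2 * n + 1) ⊕ (Σ j, Fin (r j))) :
    0 < caterpillarTestVector n i r v := by
  cases v with
  | inl a => exact geomDecay_pos _ _
  | inr => norm_num [caterpillarTestVector]

theorem caterpillar_sum_adj_caterpillarTestVector_le {i : Fin n}
    (hri : r i ≤ 2) (hr : ∀ j ≠ i, r j = 0) (v : Fin (2 * n + 1) ⊕ (Σ j, Fin (r j))) :
    (∑ w, if (caterpillar n r).Adj v w then caterpillarTestVector n i r w else 0)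
      ≤ 11 / 5 * caterpillarTestVector n i r v := by
  rw [Fintype.sum_sum_type]
  rcases v with a | p
  · have hpath := caterpillar_sum_adj_inl_inl_le (r := r) a (geomDecay_pos (2 * i + 1) · |>.le)
    have hpendant := caterpillar_sum_adj_inl_inr_le hri hr a (c := 5 / 11) (by norm_num)
    have := geomDecay_add_one_add_sub_one_le (2 * i + 1) a
    simp only [caterpillarTestVector]
    split_ifs at hpendant this <;> linarith
  · have hp : p.1 = i := by
      by_contra h
      have := hr _ h
      have := p.2.isLt
      omega
    simp only [caterpillar_not_adj_inr_inr, if_false, Finset.sum_const_zero, add_zero,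
      caterpillarTestVector, caterpillar_adj_inr_inl, hp]
    refine (Fin.sum_ite_intCast_eq_le (geomDecay (2 * i + 1)) (geomDecay_pos _ _).le).trans ?_
    norm_num [geomDecay]

end Caterpillar

theorem stmt11 (n : ℕ) (i : Fin n) (r : Fin n → ℕ) (hr : r = fun j => if j = i then 2 else 0) :
    ((eigsDesc (caterpillar n r)).getD 0 0) ^ 2 < 5 := by
  have hbound : |(eigsDesc (caterpillar n r)).getD 0 0| ≤ 11 / 5 :=
    abs_eigsDesc_getD_zero_le _ (by norm_num) fun _ hμ =>
      (caterpillar n r).abs_le_of_mem_roots_gCharpoly (caterpillarTestVector_pos n i r)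
        (caterpillar_sum_adj_caterpillarTestVector_le (by simp [hr]) (fun j hj => by simp [hr, hj]))
        hμ
  calc _ = |(eigsDesc (caterpillar n r)).getD 0 0| ^ 2 := (sq_abs _).symm
    _ ≤ (11 / 5) ^ 2 := pow_le_pow_left₀ (abs_nonneg _) hbound 2
    _ < 5 := by norm_num
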